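/- Let A be an n×n Metzler matrix, B ∈ ℝ^{n×m}, C ∈ ℝ^{m×n}, D ∈ ℝ^{m×m} entrywise nonnegative. If ρ(D) < 1 and the matrix A + B(I - D)^{-1}C is Hurwitz stable, then there exist strictly positive vectors p ∈ ℝ^n, q ∈ ℝ^m with Ap + Bq ≺ 0 and Cp + (D - I)q ≺ 0 componentwise. -/

import Mathlib

/-!
By the Neumann series, a nonnegative `E` with `ρ(E) < 1` has `(1 - E)⁻¹ = ∑ Eᴺ ≥ 1` entrywise.
For a Metzler Hurwitz matrix `M` and small `h > 0`, `P = 1 + h • M` is nonnegative with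
`ρ(P) < 1`, so `p = (1 - P)⁻¹ 𝟙` is positive and `M p = -h⁻¹ 𝟙 ≺ 0`. Apply this to
`M = A + B S C` with `S = (1 - D)⁻¹` and take `q = S (C p + ε 𝟙)`: then
`C p + (D - 1) q = -ε 𝟙`, while `A p + B q = M p + ε B S 𝟙` stays negative for small `ε > 0`.
-/

open Filter Topology Matrix

theorem summable_pow_of_spectralRadius_lt_one {A : Type*} [NormedRing A] [NormedAlgebra ℂ A]
    [CompleteSpace A] {a : A} (ha : spectralRadius ℂ a < 1) : Summable (a ^ ·) := by
  obtain ⟨c, hρc, hc1⟩ := ENNReal.lt_iff_exists_nnreal_btwn.mp ha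
  have hc1 : (c : ℝ) < 1 := by exact_mod_cast hc1
  refine .of_norm_bounded_eventually_nat (summable_geometric_of_lt_one c.2 hc1) ?_
  have hgelfand := spectrum.pow_nnnorm_pow_one_div_tendsto_nhds_spectralRadius a
  filter_upwards [hgelfand.eventually_lt_const hρc, eventually_gt_atTop 0] with n hn hn0
  rw [one_div, ENNReal.rpow_inv_lt_iff (by positivity), ENNReal.rpow_natCast] at hn
  exact_mod_cast hn.le

theorem spectrum.exists_eq_one_add_mul_of_mem_one_add_smul {𝕜 A : Type*} [Field 𝕜] [Ring A]
    [Algebra 𝕜 A] {a : A} {h : 𝕜} (hh : h ≠ 0) {μ : 𝕜} (hμ : μ ∈ spectrum 𝕜 (1 + h • a)) :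
    ∃ ν ∈ spectrum 𝕜 a, μ = 1 + h * ν := by
  rw [← map_one (algebraMap 𝕜 A), ← spectrum.vadd_eq,
    ← Units.val_mk0 hh, ← Units.smul_def, spectrum.unit_smul_eq_smul] at hμ
  obtain ⟨_, ⟨ν, hν, rfl⟩, rfl⟩ := hμ
  exact ⟨ν, hν, by simp⟩

theorem Complex.eventually_norm_one_add_mul_lt_one {ν : ℂ} (hν : ν.re < 0) :
    ∀ᶠ h : ℝ in 𝓝[>] 0, ‖1 + h * ν‖ < 1 := by
  have hlim : Tendsto (fun h : ℝ => 2 * ν.re + h * normSq ν) (𝓝 0) (𝓝 (2 * ν.re)) := by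
    have hc : Continuous fun h : ℝ => 2 * ν.re + h * normSq ν := by fun_prop
    simpa using hc.tendsto 0
  filter_upwards [nhdsWithin_le_nhds (hlim.eventually_lt_const (by linarith)), self_mem_nhdsWithin]
    with h hneg (hpos : 0 < h)
  have hsq : ‖1 + h * ν‖ ^ 2 = 1 + h * (2 * ν.re + h * normSq ν) := by
    rw [Complex.sq_norm, Complex.normSq_apply, Complex.normSq_apply]
    simp only [add_re, one_re, mul_re, ofReal_re, ofReal_im, add_im, one_im, mul_im]
    ring
  have : ‖1 + h * ν‖ ^ 2 < 1 ^ 2 := by nlinarith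
  exact lt_of_pow_lt_pow_left₀ 2 zero_le_one this

theorem exists_pos_forall_add_smul_neg {ι : Type*} [Finite ι] {x : ι → ℝ} (hx : ∀ i, x i < 0)
    (u : ι → ℝ) : ∃ ε : ℝ, 0 < ε ∧ ∀ i, (x + ε • u) i < 0 := by
  have hev : ∀ᶠ ε : ℝ in 𝓝 0, ∀ i, (x + ε • u) i < 0 := by
    refine eventually_all.2 fun i => ?_
    have hc : Continuous fun ε : ℝ => x i + ε * u i := by fun_prop
    simpa using (hc.tendsto 0).eventually_lt_const (by simpa using hx i)
  obtain ⟨ε, hε, hpos⟩ := ((eventually_nhdsWithin_of_eventually_nhds hev).and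
    (self_mem_nhdsWithin (s := Set.Ioi 0))).exists
  exact ⟨ε, hpos, hε⟩

namespace Matrix

variable {ι : Type*}

def IsNonneg {m n : Type*} (M : Matrix m n ℝ) : Prop := ∀ i j, 0 ≤ M i j

def IsMetzler (M : Matrix ι ι ℝ) : Prop := ∀ i j, i ≠ j → 0 ≤ M i j

def IsHurwitz [Fintype ι] [DecidableEq ι] (M : Matrix ι ι ℝ) : Prop :=
  ∀ μ ∈ spectrum ℂ (M.map Complex.ofReal), μ.re < 0

namespace IsNonneg

variable {l m n : Type*} [Fintype m]

theorem mul {M : Matrix l m ℝ} {N : Matrix m n ℝ} (hM : M.IsNonneg) (hN : N.IsNonneg) :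
    (M * N).IsNonneg :=
  fun _ _ => Finset.sum_nonneg fun _ _ => mul_nonneg (hM _ _) (hN _ _)

theorem mulVec {M : Matrix l m ℝ} (hM : M.IsNonneg) {v : m → ℝ} (hv : 0 ≤ v) : 0 ≤ M *ᵥ v :=
  fun _ => Finset.sum_nonneg fun _ _ => mul_nonneg (hM _ _) (hv _)

theorem one [DecidableEq ι] : (1 : Matrix ι ι ℝ).IsNonneg := fun i j => by
  rw [one_apply]; split_ifs <;> norm_num

theorem pow [Fintype ι] [DecidableEq ι] {E : Matrix ι ι ℝ} (hE : E.IsNonneg) (N : ℕ) :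
    (E ^ N).IsNonneg := by
  induction N with
  | zero => simpa using one
  | succ N ih => simpa [pow_succ] using ih.mul hE

end IsNonneg

theorem IsMetzler.add_isNonneg {A N : Matrix ι ι ℝ} (hA : A.IsMetzler) (hN : N.IsNonneg) :
    (A + N).IsMetzler :=
  fun i j hij => add_nonneg (hA i j hij) (hN i j)

section Complexification

attribute [local instance] Matrix.linftyOpNormedRing Matrix.linftyOpNormedAlgebra

theorem summable_pow_of_norm_spectrum_lt_one [Fintype ι] [DecidableEq ι] {T : Matrix ι ι ℂ}
    (hT : ∀ μ ∈ spectrum ℂ T, ‖μ‖ < 1) : Summable (T ^ ·) := by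
  refine summable_pow_of_spectralRadius_lt_one ?_
  cases isEmpty_or_nonempty ι
  · simp [spectrum.SpectralRadius.of_subsingleton]
  · exact spectrum.spectralRadius_lt_of_forall_lt T (by exact_mod_cast hT)

end Complexification

theorem summable_pow_of_norm_spectrum_map_lt_one [Fintype ι] [DecidableEq ι] {E : Matrix ι ι ℝ}
    (hE : ∀ μ ∈ spectrum ℂ (E.map Complex.ofReal), ‖μ‖ < 1) : Summable (E ^ ·) := by
  have h := summable_pow_of_norm_spectrum_lt_one hE
  refine Pi.summable.2 fun i => Pi.summable.2 fun j => Complex.summable_ofReal.1 ?_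
  refine (Pi.summable.1 (Pi.summable.1 h i) j).congr fun N => ?_
  exact congrFun (congrFun (Matrix.map_pow E Complex.ofRealHom N) i) j |>.symm

section Neumann

variable [Fintype ι] [DecidableEq ι] {E : Matrix ι ι ℝ}

theorem inv_one_sub_eq_tsum_pow (hs : Summable (E ^ ·)) : (1 - E)⁻¹ = ∑' N, E ^ N :=
  inv_eq_right_inv hs.one_sub_mul_tsum_pow

theorem one_sub_mul_inv_one_sub (hρ : ∀ μ ∈ spectrum ℂ (E.map Complex.ofReal), ‖μ‖ < 1) :
    (1 - E) * (1 - E)⁻¹ = 1 := by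
  have hs := summable_pow_of_norm_spectrum_map_lt_one hρ
  rw [inv_one_sub_eq_tsum_pow hs, hs.one_sub_mul_tsum_pow]

theorem one_apply_le_inv_one_sub_apply (hE : E.IsNonneg)
    (hρ : ∀ μ ∈ spectrum ℂ (E.map Complex.ofReal), ‖μ‖ < 1) (i j : ι) :
    (1 : Matrix ι ι ℝ) i j ≤ (1 - E)⁻¹ i j := by
  have hs := summable_pow_of_norm_spectrum_map_lt_one hρ
  have hsij := Pi.summable.1 (Pi.summable.1 hs i) j
  have htsum : (∑' N, E ^ N) i j = ∑' N, (E ^ N) i j :=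
    (congrFun (tsum_apply hs) j).trans (tsum_apply (Pi.summable.1 hs i))
  rw [inv_one_sub_eq_tsum_pow hs, htsum]
  simpa using hsij.le_tsum 0 fun N _ => hE.pow N i j

end Neumann

theorem le_mulVec_of_one_apply_le [Fintype ι] [DecidableEq ι] {S : Matrix ι ι ℝ}
    (hS : ∀ i j, (1 : Matrix ι ι ℝ) i j ≤ S i j) {v : ι → ℝ} (hv : 0 ≤ v) : v ≤ S *ᵥ v := by
  have h : 0 ≤ (S - 1) *ᵥ v := IsNonneg.mulVec (fun i j => sub_nonneg.2 (hS i j)) hv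
  rwa [sub_mulVec, one_mulVec, sub_nonneg] at h

theorem IsMetzler.eventually_isNonneg_one_add_smul [Finite ι] [DecidableEq ι] {M : Matrix ι ι ℝ}
    (hM : M.IsMetzler) : ∀ᶠ h : ℝ in 𝓝[>] 0, (1 + h • M).IsNonneg := by
  refine eventually_all.2 fun i => eventually_all.2 fun j => ?_
  rcases eq_or_ne i j with rfl | hij
  · have hc : Continuous fun h : ℝ => 1 + h * M i i := by fun_prop
    filter_upwards [eventually_nhdsWithin_of_eventually_nhds
      ((hc.tendsto 0).eventually_const_lt (by norm_num : (0 : ℝ) < 1 + 0 * M i i))] with h hh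
    simpa using hh.le
  · filter_upwards [self_mem_nhdsWithin] with h (hh : 0 < h)
    simpa [one_apply_ne hij] using mul_nonneg hh.le (hM i j hij)

theorem IsHurwitz.eventually_norm_spectrum_one_add_smul_lt_one [Fintype ι] [DecidableEq ι]
    {M : Matrix ι ι ℝ} (hM : M.IsHurwitz) :
    ∀ᶠ h : ℝ in 𝓝[>] 0, ∀ μ ∈ spectrum ℂ ((1 + h • M).map Complex.ofReal), ‖μ‖ < 1 := by
  filter_upwards [(eventually_all_finite (finite_spectrum _)).2 fun ν hν =>
    Complex.eventually_norm_one_add_mul_lt_one (hM ν hν), self_mem_nhdsWithin]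
    with h hh (hpos : 0 < h) μ hμ
  have hmap : (1 + h • M).map Complex.ofReal = 1 + (h : ℂ) • M.map Complex.ofReal := by
    ext i j
    rcases eq_or_ne i j with rfl | hij <;> simp [one_apply_ne, *]
  rw [hmap] at hμ
  obtain ⟨ν, hν, rfl⟩ :=
    spectrum.exists_eq_one_add_mul_of_mem_one_add_smul (Complex.ofReal_ne_zero.2 hpos.ne') hμ
  exact hh ν hν

theorem IsMetzler.exists_pos_mulVec_neg [Fintype ι] [DecidableEq ι] {M : Matrix ι ι ℝ}
    (hM : M.IsMetzler) (hH : M.IsHurwitz) :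
    ∃ p : ι → ℝ, (∀ i, 0 < p i) ∧ ∀ i, (M *ᵥ p) i < 0 := by
  obtain ⟨h, ⟨hP, hρ⟩, hpos : 0 < h⟩ := ((hM.eventually_isNonneg_one_add_smul.and
    hH.eventually_norm_spectrum_one_add_smul_lt_one).and self_mem_nhdsWithin).exists
  set P := 1 + h • M
  have hMP : M = (-h⁻¹) • (1 - P) := by
    simp [P, smul_smul, hpos.ne']
  refine ⟨(1 - P)⁻¹ *ᵥ 1, fun i => ?_, fun i => ?_⟩
  · exact one_pos.trans_le (le_mulVec_of_one_apply_le (one_apply_le_inv_one_sub_apply hP hρ)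
      zero_le_one i)
  · rw [hMP, smul_mulVec, mulVec_mulVec, one_sub_mul_inv_one_sub hρ, one_mulVec]
    simpa using hpos

end Matrix

/-- If `A` is Metzler, `B, C, D` nonnegative, `ρ(D) < 1` and `A + B(I - D)⁻¹C`
is Hurwitz stable, then there exist strictly positive `p, q` with
`Ap + Bq ≺ 0` and `Cp + (D - I)q ≺ 0`. -/
theorem exists_pos_vectors_of_hurwitz
    {n m : ℕ} (A : Matrix (Fin n) (Fin n) ℝ) (B : Matrix (Fin n) (Fin m) ℝ)
    (C : Matrix (Fin m) (Fin n) ℝ) (D : Matrix (Fin m) (Fin m) ℝ)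
    (hA : ∀ i j, i ≠ j → 0 ≤ A i j)
    (hB : ∀ i j, 0 ≤ B i j) (hC : ∀ i j, 0 ≤ C i j) (hD : ∀ i j, 0 ≤ D i j)
    (hρD : ∀ μ ∈ spectrum ℂ (D.map Complex.ofReal), ‖μ‖ < 1)
    (hH : ∀ μ ∈ spectrum ℂ ((A + B * (1 - D)⁻¹ * C).map Complex.ofReal), μ.re < 0) :
    ∃ (p : Fin n → ℝ) (q : Fin m → ℝ),
      (∀ i, 0 < p i) ∧ (∀ j, 0 < q j) ∧
      (∀ i, A.mulVec p i + B.mulVec q i < 0) ∧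
      (∀ j, C.mulVec p j + (D - 1).mulVec q j < 0) := by
  set S := (1 - D)⁻¹
  have hS : ∀ i j, (1 : Matrix (Fin m) (Fin m) ℝ) i j ≤ S i j :=
    one_apply_le_inv_one_sub_apply hD hρD
  have hBS : (B * S).IsNonneg := IsNonneg.mul hB fun i j => (IsNonneg.one i j).trans (hS i j)
  obtain ⟨p, hp, hMp⟩ :=
    (IsMetzler.add_isNonneg hA (hBS.mul hC)).exists_pos_mulVec_neg hH
  obtain ⟨ε, hε, hMpε⟩ := exists_pos_forall_add_smul_neg hMp ((B * S) *ᵥ 1)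
  set v := C *ᵥ p + ε • 1
  have hv : ∀ j, ε ≤ v j := fun j => by
    simpa [v] using IsNonneg.mulVec hC (fun i => (hp i).le) j
  refine ⟨p, S *ᵥ v, hp, fun j => ?_, fun i => ?_, fun j => ?_⟩
  · exact hε.trans_le ((hv j).trans
      (le_mulVec_of_one_apply_le hS (fun j => hε.le.trans (hv j)) j))
  · convert hMpε i using 1
    simp only [v, mulVec_add, mulVec_mulVec, add_mulVec, mulVec_smul, Matrix.mul_assoc,
      Pi.add_apply, Pi.smul_apply]
    ring
  · have hDS : (D - 1) * S = -1 := by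
      rw [← neg_sub, neg_mul, one_sub_mul_inv_one_sub hρD]
    simpa [v, mulVec_mulVec, hDS, neg_mulVec] using hε
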